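/- Let a be a positive integer and consider the a-Gate gadget. Let (f^1, f^2) be a 2-commodity flow on the gadget with exempt set {e_x, e_v, o_y, o_w}, and assume f^2(e_x → x) = 0, f^2(y → o_y) = 0, f^1(e_v → v) = 0 and f^1(w → o_w) = 0. Then: (1) if f^2(e_v → v) = a, then f^1(e_x → x) = 0; and (2) if f^1(e_x → x) = 1, then f^2(e_v → v) = 0. -/
import Mathlib


/-- Vertices of the `a`-Gate gadget: `Sum.inl j` is the path vertex `p_{j+1}`
(so `x = p_1` is `Sum.inl 0` and `y = p_{2a}` is `Sum.inl (2a-1)`);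
`Sum.inr 0 = v`, `Sum.inr 1 = w`, `Sum.inr 2 = e_x`, `Sum.inr 3 = e_v`,
`Sum.inr 4 = o_y`, `Sum.inr 5 = o_w`. -/
abbrev GateV (a : ℕ) := (Fin (2 * a)) ⊕ (Fin 6)

/-- Arc capacities of the `a`-Gate gadget (capacity `0` means no arc). -/
def gateCap (a : ℕ) : GateV a → GateV a → ℕ
  | Sum.inl j, Sum.inl j' => if (j' : ℕ) = (j : ℕ) + 1 then 1 else 0
  | Sum.inr i, Sum.inl j =>
      if i = 0 ∧ (j : ℕ) % 2 = 0 then 1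
      else if i = 2 ∧ (j : ℕ) = 0 then 1 else 0
  | Sum.inl j, Sum.inr i =>
      if i = 1 ∧ (j : ℕ) % 2 = 1 then 1
      else if i = 4 ∧ (j : ℕ) = 2 * a - 1 then 1 else 0
  | Sum.inr i, Sum.inr i' =>
      if i = 3 ∧ i' = 0 then a
      else if i = 1 ∧ i' = 5 then a else 0

/-- A 2-commodity flow on a capacitated directed graph, with flow conservation
required at every vertex outside the exempt set `T`. -/
def IsTwoFlow {V : Type*} [Fintype V] (cap : V → V → ℕ) (T : Set V)
    (f1 f2 : V → V → ℕ) : Prop :=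
  (∀ u v, f1 u v + f2 u v ≤ cap u v) ∧
  (∀ q, q ∉ T → (∑ u, f1 u q) = (∑ u, f1 q u)) ∧
  (∀ q, q ∉ T → (∑ u, f2 u q) = (∑ u, f2 q u))

section Aux
variable {a : ℕ}

lemma path_in_sum (g : GateV a → GateV a → ℕ)
    (hg : ∀ u v, gateCap a u v = 0 → g u v = 0) (j : Fin (2*a)) :
    (∑ j' : Fin (2*a), g (Sum.inl j') (Sum.inl j)) =
      if h : 0 < (j : ℕ) then g (Sum.inl ⟨(j:ℕ)-1, by omega⟩) (Sum.inl j) else 0 := by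
  split
  · next h =>
    refine Finset.sum_eq_single_of_mem (f := fun j' => g (Sum.inl j') (Sum.inl j))
      ⟨(j:ℕ)-1, by omega⟩ (Finset.mem_univ _) (fun j' _ hne => ?_)
    apply hg
    simp only [gateCap, ite_eq_right_iff]
    intro hj; exfalso; apply hne; ext
    simp; omega
  · next h =>
    apply Finset.sum_eq_zero
    intro j' _
    apply hg
    simp only [gateCap, ite_eq_right_iff]
    intro hj; omega

lemma path_out_sum (g : GateV a → GateV a → ℕ)
    (hg : ∀ u v, gateCap a u v = 0 → g u v = 0) (j : Fin (2*a)) :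
    (∑ j' : Fin (2*a), g (Sum.inl j) (Sum.inl j')) =
      if h : (j : ℕ) + 1 < 2*a then g (Sum.inl j) (Sum.inl ⟨(j:ℕ)+1, h⟩) else 0 := by
  split
  · next h =>
    refine Finset.sum_eq_single_of_mem (f := fun j' => g (Sum.inl j) (Sum.inl j'))
      ⟨(j:ℕ)+1, h⟩ (Finset.mem_univ _) (fun j' _ hne => ?_)
    apply hg
    simp only [gateCap, ite_eq_right_iff]
    intro hj; exfalso; apply hne; ext; simp; omega
  · next h =>
    apply Finset.sum_eq_zero
    intro j' _
    apply hg
    simp only [gateCap, ite_eq_right_iff]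
    intro hj; omega

lemma sum_in_inl (g : GateV a → GateV a → ℕ)
    (hg : ∀ u v, gateCap a u v = 0 → g u v = 0) (j : Fin (2*a)) :
    (∑ u, g u (Sum.inl j)) =
      (∑ j' : Fin (2*a), g (Sum.inl j') (Sum.inl j))
        + g (Sum.inr 0) (Sum.inl j) + g (Sum.inr 2) (Sum.inl j) := by
  rw [Fintype.sum_sum_type]
  have h1 : g (Sum.inr 1) (Sum.inl j) = 0 := hg _ _ (by simp [gateCap])
  have h3 : g (Sum.inr 3) (Sum.inl j) = 0 := hg _ _ (by simp [gateCap])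
  have h4 : g (Sum.inr 4) (Sum.inl j) = 0 := hg _ _ (by simp [gateCap])
  have h5 : g (Sum.inr 5) (Sum.inl j) = 0 := hg _ _ (by simp [gateCap])
  rw [Fin.sum_univ_six, h1, h3, h4, h5]
  ring

lemma sum_out_inl (g : GateV a → GateV a → ℕ)
    (hg : ∀ u v, gateCap a u v = 0 → g u v = 0) (j : Fin (2*a)) :
    (∑ u, g (Sum.inl j) u) =
      (∑ j' : Fin (2*a), g (Sum.inl j) (Sum.inl j'))
        + g (Sum.inl j) (Sum.inr 1) + g (Sum.inl j) (Sum.inr 4) := by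
  rw [Fintype.sum_sum_type]
  have h0 : g (Sum.inl j) (Sum.inr 0) = 0 := hg _ _ (by simp [gateCap])
  have h2 : g (Sum.inl j) (Sum.inr 2) = 0 := hg _ _ (by simp [gateCap])
  have h3 : g (Sum.inl j) (Sum.inr 3) = 0 := hg _ _ (by simp [gateCap])
  have h5 : g (Sum.inl j) (Sum.inr 5) = 0 := hg _ _ (by simp [gateCap])
  rw [Fin.sum_univ_six, h0, h2, h3, h5]
  ring

lemma sum_in_v (g : GateV a → GateV a → ℕ)
    (hg : ∀ u v, gateCap a u v = 0 → g u v = 0) :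
    (∑ u, g u (Sum.inr 0)) = g (Sum.inr 3) (Sum.inr 0) := by
  rw [Fintype.sum_sum_type]
  have hl : ∀ j : Fin (2*a), g (Sum.inl j) (Sum.inr 0) = 0 :=
    fun j => hg _ _ (by simp [gateCap])
  rw [Finset.sum_eq_zero (fun j _ => hl j), Fin.sum_univ_six]
  have h0 : g (Sum.inr 0) (Sum.inr 0) = 0 := hg _ _ (by simp [gateCap])
  have h1 : g (Sum.inr 1) (Sum.inr 0) = 0 := hg _ _ (by simp [gateCap])
  have h2 : g (Sum.inr 2) (Sum.inr 0) = 0 := hg _ _ (by simp [gateCap])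
  have h4 : g (Sum.inr 4) (Sum.inr 0) = 0 := hg _ _ (by simp [gateCap])
  have h5 : g (Sum.inr 5) (Sum.inr 0) = 0 := hg _ _ (by simp [gateCap])
  rw [h0, h1, h2, h4, h5]; ring

lemma sum_out_v (g : GateV a → GateV a → ℕ)
    (hg : ∀ u v, gateCap a u v = 0 → g u v = 0) :
    (∑ u, g (Sum.inr 0) u) = ∑ j : Fin (2*a), g (Sum.inr 0) (Sum.inl j) := by
  rw [Fintype.sum_sum_type]
  have hr : ∀ i : Fin 6, g (Sum.inr 0) (Sum.inr i) = 0 :=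
    fun i => hg _ _ (by simp [gateCap])
  rw [Finset.sum_eq_zero (fun i _ => hr i)]; ring

lemma sum_in_w (g : GateV a → GateV a → ℕ)
    (hg : ∀ u v, gateCap a u v = 0 → g u v = 0) :
    (∑ u, g u (Sum.inr 1)) = ∑ j : Fin (2*a), g (Sum.inl j) (Sum.inr 1) := by
  rw [Fintype.sum_sum_type]
  have hr : ∀ i : Fin 6, g (Sum.inr i) (Sum.inr 1) = 0 :=
    fun i => hg _ _ (by simp [gateCap])
  rw [Finset.sum_eq_zero (fun i _ => hr i)]; ring

lemma sum_out_w (g : GateV a → GateV a → ℕ)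
    (hg : ∀ u v, gateCap a u v = 0 → g u v = 0) :
    (∑ u, g (Sum.inr 1) u) = g (Sum.inr 1) (Sum.inr 5) := by
  rw [Fintype.sum_sum_type]
  have hl : ∀ j : Fin (2*a), g (Sum.inr 1) (Sum.inl j) = 0 :=
    fun j => hg _ _ (by simp [gateCap])
  rw [Finset.sum_eq_zero (fun j _ => hl j), Fin.sum_univ_six]
  have h0 : g (Sum.inr 1) (Sum.inr 0) = 0 := hg _ _ (by simp [gateCap])
  have h1 : g (Sum.inr 1) (Sum.inr 1) = 0 := hg _ _ (by simp [gateCap])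
  have h2 : g (Sum.inr 1) (Sum.inr 2) = 0 := hg _ _ (by simp [gateCap])
  have h3 : g (Sum.inr 1) (Sum.inr 3) = 0 := hg _ _ (by simp [gateCap])
  have h4 : g (Sum.inr 1) (Sum.inr 4) = 0 := hg _ _ (by simp [gateCap])
  rw [h0, h1, h2, h3, h4]; ring

lemma parity_count : ∀ n : ℕ,
    (∑ j : Fin (2*n), (if (j:ℕ) % 2 = 0 then 1 else 0)) = n := by
  intro n
  rw [Fin.sum_univ_eq_sum_range (fun k => if k % 2 = 0 then 1 else 0)]
  induction n with
  | zero => simp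
  | succ n ih =>
      have : 2 * (n+1) = (2*n).succ.succ := by omega
      rw [this, Finset.sum_range_succ, Finset.sum_range_succ, ih]
      have h1 : (2*n) % 2 = 0 := by omega
      have h2 : (2*n).succ % 2 = 1 := by omega
      rw [h1]
      simp [h2]

end Aux

/-- Lemma 3.4 (functionality of the `a`-Gate gadget). -/
theorem gate_gadget_flow (a : ℕ) (ha : 0 < a)
    (f1 f2 : GateV a → GateV a → ℕ)
    (hf : IsTwoFlow (gateCap a)
      ({Sum.inr 2, Sum.inr 3, Sum.inr 4, Sum.inr 5} : Set (GateV a)) f1 f2)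
    (h1 : f2 (Sum.inr 2) (Sum.inl ⟨0, by omega⟩) = 0)
    (h2 : f2 (Sum.inl ⟨2 * a - 1, by omega⟩) (Sum.inr 4) = 0)
    (h3 : f1 (Sum.inr 3) (Sum.inr 0) = 0)
    (h4 : f1 (Sum.inr 1) (Sum.inr 5) = 0) :
    (f2 (Sum.inr 3) (Sum.inr 0) = a → f1 (Sum.inr 2) (Sum.inl ⟨0, by omega⟩) = 0) ∧
    (f1 (Sum.inr 2) (Sum.inl ⟨0, by omega⟩) = 1 → f2 (Sum.inr 3) (Sum.inr 0) = 0) := by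
  obtain ⟨hcap, hc1, hc2⟩ := hf
  have hz1 : ∀ u v, gateCap a u v = 0 → f1 u v = 0 := by
    intro u v h; have := hcap u v; omega
  have hz2 : ∀ u v, gateCap a u v = 0 → f2 u v = 0 := by
    intro u v h; have := hcap u v; omega
  have hTl : ∀ j : Fin (2*a), (Sum.inl j : GateV a) ∉
      ({Sum.inr 2, Sum.inr 3, Sum.inr 4, Sum.inr 5} : Set (GateV a)) := by
    intro j; simp
  have hT0 : (Sum.inr 0 : GateV a) ∉
      ({Sum.inr 2, Sum.inr 3, Sum.inr 4, Sum.inr 5} : Set (GateV a)) := by simp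
  have hT1 : (Sum.inr 1 : GateV a) ∉
      ({Sum.inr 2, Sum.inr 3, Sum.inr 4, Sum.inr 5} : Set (GateV a)) := by simp
  -- f1 out of v is zero everywhere
  have consA := hc1 (Sum.inr 0) hT0
  rw [sum_in_v f1 hz1, sum_out_v f1 hz1, h3] at consA
  have hA : ∀ j : Fin (2*a), f1 (Sum.inr 0) (Sum.inl j) = 0 := by
    intro j
    exact Finset.sum_eq_zero_iff.mp consA.symm j (Finset.mem_univ j)
  -- f1 into w is zero everywhere
  have consB := hc1 (Sum.inr 1) hT1
  rw [sum_in_w f1 hz1, sum_out_w f1 hz1, h4] at consB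
  have hB : ∀ j : Fin (2*a), f1 (Sum.inl j) (Sum.inr 1) = 0 := by
    intro j
    exact Finset.sum_eq_zero_iff.mp consB j (Finset.mem_univ j)
  -- expanded conservation at path vertices
  have cons1 : ∀ (k : ℕ) (hk : k < 2*a),
      (if h : 0 < k then f1 (Sum.inl ⟨k-1, by omega⟩) (Sum.inl ⟨k, hk⟩) else 0)
        + f1 (Sum.inr 0) (Sum.inl ⟨k, hk⟩) + f1 (Sum.inr 2) (Sum.inl ⟨k, hk⟩)
      = (if h : k+1 < 2*a then f1 (Sum.inl ⟨k, hk⟩) (Sum.inl ⟨k+1, h⟩) else 0)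
        + f1 (Sum.inl ⟨k, hk⟩) (Sum.inr 1) + f1 (Sum.inl ⟨k, hk⟩) (Sum.inr 4) := by
    intro k hk
    have h := hc1 (Sum.inl ⟨k, hk⟩) (hTl _)
    rw [sum_in_inl f1 hz1, sum_out_inl f1 hz1, path_in_sum f1 hz1,
      path_out_sum f1 hz1] at h
    exact h
  have cons2 : ∀ (k : ℕ) (hk : k < 2*a),
      (if h : 0 < k then f2 (Sum.inl ⟨k-1, by omega⟩) (Sum.inl ⟨k, hk⟩) else 0)
        + f2 (Sum.inr 0) (Sum.inl ⟨k, hk⟩) + f2 (Sum.inr 2) (Sum.inl ⟨k, hk⟩)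
      = (if h : k+1 < 2*a then f2 (Sum.inl ⟨k, hk⟩) (Sum.inl ⟨k+1, h⟩) else 0)
        + f2 (Sum.inl ⟨k, hk⟩) (Sum.inr 1) + f2 (Sum.inl ⟨k, hk⟩) (Sum.inr 4) := by
    intro k hk
    have h := hc2 (Sum.inl ⟨k, hk⟩) (hTl _)
    rw [sum_in_inl f2 hz2, sum_out_inl f2 hz2, path_in_sum f2 hz2,
      path_out_sum f2 hz2] at h
    exact h
  -- capacity facts at path vertices
  have hcap4 : ∀ (g : GateV a → GateV a → ℕ) (hg : ∀ u v, gateCap a u v = 0 → g u v = 0)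
      (k : ℕ) (hk : k < 2*a), k ≠ 2*a - 1 → g (Sum.inl ⟨k, hk⟩) (Sum.inr 4) = 0 := by
    intro g hg k hk hne
    apply hg
    simp [gateCap]
    omega
  have hcap2 : ∀ (g : GateV a → GateV a → ℕ) (hg : ∀ u v, gateCap a u v = 0 → g u v = 0)
      (k : ℕ) (hk : k < 2*a), k ≠ 0 → g (Sum.inr 2) (Sum.inl ⟨k, hk⟩) = 0 := by
    intro g hg k hk hne
    apply hg
    simp [gateCap]
    omega
  have hcapw : ∀ (g : GateV a → GateV a → ℕ) (hg : ∀ u v, gateCap a u v = 0 → g u v = 0)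
      (k : ℕ) (hk : k < 2*a), k % 2 = 0 → g (Sum.inl ⟨k, hk⟩) (Sum.inr 1) = 0 := by
    intro g hg k hk hpar
    apply hg
    simp [gateCap]
    omega
  -- f1 is constant along the path
  have key1 : ∀ (k : ℕ) (hk : k + 1 < 2*a),
      f1 (Sum.inl ⟨k, by omega⟩) (Sum.inl ⟨k+1, hk⟩)
        = f1 (Sum.inr 2) (Sum.inl ⟨0, by omega⟩) := by
    intro k
    induction k with
    | zero =>
      intro hk
      have h := cons1 0 (by omega)
      simp only [dif_neg (by omega : ¬ (0:ℕ) < 0), dif_pos hk, hA, hB,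
        hcap4 f1 hz1 0 (by omega) (by omega)] at h
      omega
    | succ k ih =>
      intro hk
      have h := cons1 (k+1) (by omega)
      simp only [dif_pos (by omega : 0 < k+1), dif_pos hk, Nat.add_sub_cancel, hA, hB,
        hcap4 f1 hz1 (k+1) (by omega) (by omega),
        hcap2 f1 hz1 (k+1) (by omega) (by omega), ih (by omega)] at h
      omega
  constructor
  · -- case 1
    intro hEv
    have consV := hc2 (Sum.inr 0) hT0
    rw [sum_in_v f2 hz2, sum_out_v f2 hz2, hEv] at consV
    have hbound : ∀ j ∈ Finset.univ, f2 (Sum.inr 0) (Sum.inl j) ≤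
        (if ((j : Fin (2*a)) : ℕ) % 2 = 0 then 1 else 0) := by
      intro j _
      by_cases hj : (j : ℕ) % 2 = 0
      · have hc := hcap (Sum.inr 0) (Sum.inl j)
        simp [gateCap, hj] at hc
        simp [hj]
        omega
      · have h0 : f2 (Sum.inr 0) (Sum.inl j) = 0 := hz2 _ _ (by simp [gateCap, hj])
        simp [hj, h0]
    have hsum : (∑ j : Fin (2*a), f2 (Sum.inr 0) (Sum.inl j))
        = ∑ j : Fin (2*a), (if ((j : Fin (2*a)) : ℕ) % 2 = 0 then 1 else 0) := by
      rw [← consV, parity_count a]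
    have hpt := (Finset.sum_eq_sum_iff_of_le hbound).mp hsum ⟨0, by omega⟩
      (Finset.mem_univ _)
    simp at hpt
    -- hpt : f2 (inr 0) (inl 0) = 1
    have h := cons2 0 (by omega)
    simp only [dif_neg (by omega : ¬ (0:ℕ) < 0), dif_pos (by omega : (0:ℕ)+1 < 2*a), hpt, h1,
      hcapw f2 hz2 0 (by omega) (by omega),
      hcap4 f2 hz2 0 (by omega) (by omega), Nat.zero_add] at h
    -- h : 0 + 1 + 0 = f2 edge + 0 + 0
    have hce := hcap (Sum.inl (⟨0, by omega⟩ : Fin (2*a))) (Sum.inl ⟨1, by omega⟩)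
    simp [gateCap] at hce
    have h0 := cons1 0 (by omega)
    simp only [dif_neg (by omega : ¬ (0:ℕ) < 0), dif_pos (by omega : (0:ℕ)+1 < 2*a), hA, hB,
      hcap4 f1 hz1 0 (by omega) (by omega), Nat.zero_add] at h0
    omega
  · -- case 2
    intro hF1
    have hedge2 : ∀ (k : ℕ) (hk : k + 1 < 2*a),
        f2 (Sum.inl ⟨k, by omega⟩) (Sum.inl ⟨k+1, hk⟩) = 0 := by
      intro k hk
      have hce := hcap (Sum.inl (⟨k, by omega⟩ : Fin (2*a))) (Sum.inl ⟨k+1, hk⟩)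
      simp [gateCap] at hce
      have := key1 k hk
      omega
    have hv0 : ∀ (k : ℕ) (hk : k < 2*a), k % 2 = 0 →
        f2 (Sum.inr 0) (Sum.inl ⟨k, hk⟩) = 0 := by
      intro k hk hpar
      have hjlt : k + 1 < 2*a := by omega
      have h := cons2 k hk
      simp only [dif_pos hjlt, hedge2 k hjlt, hcapw f2 hz2 k hk hpar,
        hcap4 f2 hz2 k hk (by omega)] at h
      rcases Nat.eq_zero_or_pos k with hk0 | hk0
      · subst hk0
        simp only [dif_neg (by omega : ¬ (0:ℕ) < 0), h1] at h
        omega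
      · obtain ⟨m, rfl⟩ : ∃ m, k = m + 1 := ⟨k - 1, by omega⟩
        simp only [dif_pos hk0, Nat.add_sub_cancel, hedge2 m (by omega),
          hcap2 f2 hz2 (m+1) hk (by omega)] at h
        omega
    have hv0' : ∀ j : Fin (2*a), f2 (Sum.inr 0) (Sum.inl j) = 0 := by
      intro j
      by_cases hj : (j : ℕ) % 2 = 0
      · exact hv0 (j : ℕ) j.isLt hj
      · exact hz2 _ _ (by simp [gateCap, hj])
    have consV := hc2 (Sum.inr 0) hT0
    rw [sum_in_v f2 hz2, sum_out_v f2 hz2] at consV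
    rw [consV]
    exact Finset.sum_eq_zero (fun j _ => hv0' j)
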